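/- Let A be the n×n incidence matrix of the closed in-neighborhood hypergraph of a tournament on n ≥ 1 vertices, so that A + Aᵀ equals J + I (all-ones matrix plus identity). If x ∈ ℝⁿ satisfies x ≥ 0 and Ax ≤ 1 (componentwise), then (Σᵢ xᵢ)² ≤ xᵀ(A+Aᵀ)x - xᵀx ≤ 2·Σᵢ xᵢ - xᵀx, hence Σᵢ xᵢ < 2. -/

import Mathlib

/-!
Writing `S = ∑ xᵢ` and `q = xᵀx`, the identity `A + Aᵀ = J + I` gives `xᵀ(A + Aᵀ)x = S² + q`,
while `xᵀ(A + Aᵀ)x = 2 xᵀAx ≤ 2 ∑ xᵢ = 2S` because `x ≥ 0` and `Ax ≤ 1`. Hence `S² + q ≤ 2S`,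
so `S ≤ 2`, and `S = 2` would force `q = 0`, i.e. `x = 0`.
-/

open Matrix Finset

variable {ι : Type*} [Fintype ι]

lemma sum_sum_mul_mul_eq_dotProduct_mulVec (M : Matrix ι ι ℝ) (x : ι → ℝ) :
    ∑ i, ∑ j, x i * M i j * x j = x ⬝ᵥ (M *ᵥ x) := by
  simp only [dotProduct, mulVec, mul_sum, mul_assoc]

lemma dotProduct_add_transpose_mulVec (A : Matrix ι ι ℝ) (x : ι → ℝ) :
    x ⬝ᵥ ((A + Aᵀ) *ᵥ x) = 2 * (x ⬝ᵥ (A *ᵥ x)) := by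
  rw [add_mulVec, dotProduct_add, dotProduct_mulVec x Aᵀ, vecMul_transpose, dotProduct_comm]
  ring

lemma dotProduct_allOnes_add_one_mulVec [DecidableEq ι] (x : ι → ℝ) :
    x ⬝ᵥ (((of fun _ _ => (1 : ℝ)) + 1) *ᵥ x) = (∑ i, x i) ^ 2 + ∑ i, x i ^ 2 := by
  rw [add_mulVec, one_mulVec, dotProduct_add]
  simp only [dotProduct, mulVec, of_apply, one_mul, ← sum_mul, sq]

lemma dotProduct_mulVec_le_sum {A : Matrix ι ι ℝ} {x : ι → ℝ} (hx : ∀ i, 0 ≤ x i)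
    (hAx : ∀ i, (A *ᵥ x) i ≤ 1) : x ⬝ᵥ (A *ᵥ x) ≤ ∑ i, x i :=
  sum_le_sum fun i _ => mul_le_of_le_one_right (hx i) (hAx i)

lemma sum_lt_two_of_sq_sum_add_sum_sq_le {x : ι → ℝ}
    (h : (∑ i, x i) ^ 2 + ∑ i, x i ^ 2 ≤ 2 * ∑ i, x i) : ∑ i, x i < 2 := by
  have hq : 0 ≤ ∑ i, x i ^ 2 := sum_nonneg fun i _ => sq_nonneg (x i)
  refine lt_of_le_of_ne (by nlinarith) fun hS => ?_
  have hq0 : ∑ i, x i ^ 2 = 0 := by rw [hS] at h; linarith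
  have hx0 : ∀ i, x i = 0 := fun i =>
    pow_eq_zero_iff two_ne_zero |>.mp <|
      (sum_eq_zero_iff_of_nonneg fun j _ => sq_nonneg (x j)).mp hq0 i (mem_univ i)
  simp [hx0] at hS

theorem stmt5_general (n : ℕ) (A : Matrix (Fin n) (Fin n) ℝ)
    (hA : A + A.transpose = Matrix.of (fun _ _ => (1 : ℝ)) + 1)
    (x : Fin n → ℝ) (hx : ∀ i, 0 ≤ x i)
    (hAx : ∀ i, A.mulVec x i ≤ 1) :
    (∑ i, x i) ^ 2 ≤
        (∑ i, ∑ j, x i * (A + A.transpose) i j * x j) - ∑ i, (x i) ^ 2 ∧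
    (∑ i, ∑ j, x i * (A + A.transpose) i j * x j) - ∑ i, (x i) ^ 2 ≤
        2 * (∑ i, x i) - ∑ i, (x i) ^ 2 ∧
    ∑ i, x i < 2 := by
  have hform := sum_sum_mul_mul_eq_dotProduct_mulVec (A + A.transpose) x
  have hJ : x ⬝ᵥ ((A + Aᵀ) *ᵥ x) = (∑ i, x i) ^ 2 + ∑ i, x i ^ 2 := by
    rw [hA, dotProduct_allOnes_add_one_mulVec]
  have hle : x ⬝ᵥ ((A + Aᵀ) *ᵥ x) ≤ 2 * ∑ i, x i := by
    rw [dotProduct_add_transpose_mulVec]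
    linarith [dotProduct_mulVec_le_sum hx hAx]
  refine ⟨by linarith, by linarith, sum_lt_two_of_sq_sum_add_sum_sq_le (by linarith)⟩

/-- Matrix form of the fractional transversal bound for tournaments. -/
theorem stmt5 (n : ℕ) (hn : 1 ≤ n) (A : Matrix (Fin n) (Fin n) ℝ)
    (hA01 : ∀ i j, A i j = 0 ∨ A i j = 1)
    (hA : A + A.transpose = Matrix.of (fun _ _ => (1 : ℝ)) + 1)
    (x : Fin n → ℝ) (hx : ∀ i, 0 ≤ x i)
    (hAx : ∀ i, A.mulVec x i ≤ 1) :
    (∑ i, x i) ^ 2 ≤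
        (∑ i, ∑ j, x i * (A + A.transpose) i j * x j) - ∑ i, (x i) ^ 2 ∧
    (∑ i, ∑ j, x i * (A + A.transpose) i j * x j) - ∑ i, (x i) ^ 2 ≤
        2 * (∑ i, x i) - ∑ i, (x i) ^ 2 ∧
    ∑ i, x i < 2 :=
  stmt5_general n A hA x hx hAx
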